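/- arXiv:1803.01055 — 3 statements merged into one kernel-verified Lean document; each statement's English description precedes it below -/
import Mathlib

section
/- For every non-negative integer k, every k-11-representable simple graph is also (k+1)-11-representable; that is, the class of k-11-representable graphs is contained in the class of (k+1)-11-representable graphs. -/
/-- Number of occurrences of the consecutive pattern 11 in a word,
i.e. the number of positions `i` with `u i = u (i+1)`. -/
def pattern11Count {V : Type*} [DecidableEq V] (u : List V) : ℕ :=
  (u.zip u.tail).countP (fun p => decide (p.1 = p.2))

/-- `w` is a `k`-11-representant of the simple graph `G`: every vertex occurs in `w`,
and two distinct vertices are adjacent iff the subword of `w` induced by them contains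
at most `k` occurrences of the consecutive pattern 11. -/
def IsK11Rep {V : Type*} [DecidableEq V] (G : SimpleGraph V) (k : ℕ) (w : List V) : Prop :=
  (∀ v : V, v ∈ w) ∧
  ∀ x y : V, x ≠ y →
    (G.Adj x y ↔ pattern11Count (w.filter (fun a => decide (a = x ∨ a = y))) ≤ k)

/-- A simple graph is `k`-11-representable if it has a `k`-11-representant. -/
def K11Representable {V : Type*} [DecidableEq V] (G : SimpleGraph V) (k : ℕ) : Prop :=
  ∃ w : List V, IsK11Rep G k w

/-- A graph is `t`-uniformly `k`-11-representable if it has a `k`-11-representant in which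
every vertex occurs exactly `t` times. -/
def UniformK11Rep {V : Type*} [DecidableEq V] (G : SimpleGraph V) (t k : ℕ) : Prop :=
  ∃ w : List V, IsK11Rep G k w ∧ ∀ v : V, w.count v = t

/-- The final permutation `σ(w)`: distinct letters of `w` in order of last occurrence. -/
def finalPerm {V : Type*} [DecidableEq V] (w : List V) : List V := w.dedup

/-- The initial permutation `π(w)`: distinct letters of `w` in order of first occurrence. -/
def initPerm {V : Type*} [DecidableEq V] (w : List V) : List V := (w.reverse.dedup).reverse

/-!
Appending the reverse of the final permutation `σ(w)` to `w` raises the number of 11s in every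
induced pair subword by exactly one. Restriction to `{x, y}` commutes with taking `σ`, and the
reverse of `σ(u)` begins with the last letter of `u` (one new 11 at the seam) and has no repeated
letters (no further 11s).
-/

namespace List

variable {α : Type*} [DecidableEq α]

theorem dedup_filter (p : α → Bool) (l : List α) : (l.filter p).dedup = l.dedup.filter p := by
  induction l with
  | nil => rfl
  | cons a l ih =>
    by_cases ha : a ∈ l <;> by_cases hp : p a <;>
      simp [dedup_cons_of_mem, dedup_cons_of_notMem, ha, hp, ih]

theorem getLast?_dedup (l : List α) : l.dedup.getLast? = l.getLast? := by
  induction l with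
  | nil => rfl
  | cons a l ih =>
    cases l with
    | nil => rfl
    | cons b l =>
      by_cases ha : a ∈ b :: l
      · rw [dedup_cons_of_mem ha, ih, getLast?_cons_cons]
      · rw [dedup_cons_of_notMem ha, getLast?_cons, ih, getLast?_cons_cons, getLast?_cons,
          Option.getD_some]

end List

section

variable {V : Type*} [DecidableEq V]

theorem pattern11Count_cons_cons (a b : V) (l : List V) :
    pattern11Count (a :: b :: l) = pattern11Count (b :: l) + if a = b then 1 else 0 := by
  simp [pattern11Count, List.countP_cons]

theorem pattern11Count_append_cons (u v : List V) (c : V) :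
    pattern11Count (u ++ c :: v) =
      pattern11Count u + pattern11Count (c :: v) + if u.getLast? = some c then 1 else 0 := by
  induction u with
  | nil => simp [pattern11Count]
  | cons a u ih =>
    cases u with
    | nil =>
      rw [List.cons_append, List.nil_append, pattern11Count_cons_cons, List.getLast?_singleton]
      simp [pattern11Count]
    | cons b u =>
      rw [List.cons_append, List.cons_append, pattern11Count_cons_cons, ← List.cons_append, ih,
        pattern11Count_cons_cons, List.getLast?_cons_cons]
      omega

theorem pattern11Count_eq_zero_of_nodup {u : List V} (hu : u.Nodup) : pattern11Count u = 0 := by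
  induction u with
  | nil => rfl
  | cons a u ih =>
    cases u with
    | nil => rfl
    | cons b u =>
      rw [pattern11Count_cons_cons, ih hu.of_cons, if_neg]
      rintro rfl
      exact (List.nodup_cons.1 hu).1 List.mem_cons_self

theorem pattern11Count_append_reverse_dedup {u : List V} (hu : u ≠ []) :
    pattern11Count (u ++ u.dedup.reverse) = pattern11Count u + 1 := by
  obtain ⟨c, v, hcv⟩ := List.exists_cons_of_ne_nil
    (List.reverse_ne_nil_iff.2 ((List.dedup_eq_nil u).not.2 hu))
  have hlast : u.getLast? = some c := by
    rw [← List.getLast?_dedup, ← List.head?_reverse, hcv, List.head?_cons]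
  have hnodup : (c :: v).Nodup := hcv ▸ List.nodup_reverse.2 (List.nodup_dedup u)
  rw [hcv, pattern11Count_append_cons, pattern11Count_eq_zero_of_nodup hnodup, if_pos hlast]

end

theorem k11Representable_succ_general {V : Type*} [DecidableEq V] (k : ℕ)
    (G : SimpleGraph V) (h : K11Representable G k) :
    K11Representable G (k + 1) := by
  obtain ⟨w, hmem, hadj⟩ := h
  refine ⟨w ++ (finalPerm w).reverse, fun v => List.mem_append_left _ (hmem v),
    fun x y hxy => ?_⟩
  have hne : w.filter (fun a => decide (a = x ∨ a = y)) ≠ [] :=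
    List.ne_nil_of_mem (List.mem_filter.2 ⟨hmem x, by simp⟩)
  rw [hadj x y hxy, finalPerm, List.filter_append, List.filter_reverse, ← List.dedup_filter,
    pattern11Count_append_reverse_dedup hne]
  omega

/-- every `k`-11-representable graph is `(k+1)`-11-representable. -/
theorem k11Representable_succ {V : Type*} [DecidableEq V] [Fintype V] (k : ℕ)
    (G : SimpleGraph V) (h : K11Representable G k) :
    K11Representable G (k + 1) :=
  k11Representable_succ_general k G h
end

section
/- Let k ≥ 0, let G be a simple graph with a vertex x, and let G_{xy} be the graph obtained from G by adding a new vertex y adjacent only to x. Then G is k-11-representable if and only if G_{xy} is k-11-representable. Equivalently: if H is a simple graph with a vertex y of degree 1 whose unique neighbour is x, then H is k-11-representable if and only if the induced subgraph H \ y is k-11-representable. -/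
/-!
Let `m` be a `k`-11-representant of `H \ y` with final permutation `σ = P ++ x :: Q`. Insert `y`
after every `x` of `m` and append `P x (Q P y x y Q P x)^(k+1)`. Erasing `y` from the result
gives `m σ^(2k+2) P x`, and appending copies of `σ` or a prefix of it creates no new factor 11
in any `w|_{a,b}`, since `w|_{a,b}` ends with the letter of `{a, b}` that comes last in `σ`.
Restricted to `{x, y}` the new word alternates, while restricted to `{y, v}` each of the `k+1`
blocks contributes `v y y v`. Conversely, erasing `y` from a representant of `H` represents `H \ y`.
-/

section Pattern11

variable {V : Type*} [DecidableEq V]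

theorem pattern11Count_add_le_append (u v : List V) :
    pattern11Count u + pattern11Count v ≤ pattern11Count (u ++ v) := by
  induction u with
  | nil => simp [pattern11Count]
  | cons a u ih =>
    rcases u with _ | ⟨b, u⟩
    · rcases v with _ | ⟨c, v⟩
      · simp [pattern11Count]
      · rw [List.singleton_append, pattern11Count_cons_cons]
        simp [pattern11Count]
    · simp only [List.cons_append, pattern11Count_cons_cons] at ih ⊢
      omega

theorem pattern11Count_append_of_ne {u v : List V}
    (h : ∀ a ∈ u.getLast?, ∀ b ∈ v.head?, a ≠ b) :
    pattern11Count (u ++ v) = pattern11Count u + pattern11Count v := by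
  induction u with
  | nil => simp [pattern11Count]
  | cons a u ih =>
    rcases u with _ | ⟨b, u⟩
    · rcases v with _ | ⟨c, v⟩
      · simp [pattern11Count]
      · rw [List.singleton_append, pattern11Count_cons_cons]
        simp [pattern11Count, h a rfl c rfl]
    · have := ih fun c hc => h c (by rwa [List.getLast?_cons_cons])
      simp only [List.cons_append, pattern11Count_cons_cons] at this ⊢
      omega

theorem pattern11Count_eq_zero_of_nodup_s3 {l : List V} (hl : l.Nodup) : pattern11Count l = 0 := by
  induction l with
  | nil => rfl
  | cons a l ih =>
    rcases l with _ | ⟨b, l⟩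
    · rfl
    · rw [List.nodup_cons] at hl
      have hab : a ≠ b := fun h => hl.1 (h ▸ List.mem_cons_self)
      simp [pattern11Count_cons_cons, ih hl.2, hab]

theorem pattern11Count_map {W : Type*} [DecidableEq W] {f : V → W} (hf : f.Injective) :
    ∀ l : List V, pattern11Count (l.map f) = pattern11Count l
  | [] | [_] => rfl
  | a :: b :: l => by
    simp only [List.map_cons, pattern11Count_cons_cons, hf.eq_iff]
    rw [← List.map_cons, pattern11Count_map hf]

theorem mul_pattern11Count_le (l : List V) (n : ℕ) :
    n * pattern11Count l ≤ pattern11Count (List.replicate n l).flatten := by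
  induction n with
  | zero => simp
  | succ n ih =>
    rw [List.replicate_succ, List.flatten_cons, Nat.succ_mul]
    have := pattern11Count_add_le_append l (List.replicate n l).flatten
    omega

theorem pattern11Count_cons_flatten_replicate {x y : V}
    (hxy : x ≠ y) (n : ℕ) : pattern11Count (x :: (List.replicate n [y, x]).flatten) = 0 := by
  induction n with
  | zero => rfl
  | succ n ih =>
    simp only [List.replicate_succ, List.flatten_cons, List.cons_append, List.nil_append,
      pattern11Count_cons_cons, ih]
    simp [hxy, Ne.symm hxy]

end Pattern11

section FinalPerm

variable {V : Type*} [DecidableEq V]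

theorem getLast?_finalPerm : ∀ w : List V, (finalPerm w).getLast? = w.getLast?
  | [] => rfl
  | [_] => rfl
  | a :: b :: l => by
    have ih := getLast?_finalPerm (b :: l)
    have hne : finalPerm (b :: l) ≠ [] := by simp [finalPerm]
    unfold finalPerm at ih hne ⊢
    rw [List.getLast?_cons_cons, ← ih, List.dedup_cons]
    split_ifs
    · rfl
    · rw [List.getLast?_cons, List.getLast?_eq_some_getLast hne]; rfl

theorem finalPerm_filter (p : V → Bool) : ∀ w : List V,
    finalPerm (w.filter p) = (finalPerm w).filter p
  | [] => rfl
  | a :: w => by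
    have ih := finalPerm_filter p w
    unfold finalPerm at ih ⊢
    by_cases hp : p a
    · by_cases ha : a ∈ w
      · rw [List.filter_cons_of_pos hp, List.dedup_cons_of_mem (List.mem_filter.2 ⟨ha, hp⟩),
          List.dedup_cons_of_mem ha, ih]
      · rw [List.filter_cons_of_pos hp,
          List.dedup_cons_of_notMem fun h => ha (List.mem_of_mem_filter h),
          List.dedup_cons_of_notMem ha, List.filter_cons_of_pos hp, ih]
    · rw [List.filter_cons_of_neg hp, ih, List.dedup_cons]
      split_ifs
      · rfl
      · rw [List.filter_cons_of_neg hp]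

theorem finalPerm_append_finalPerm (w : List V) : finalPerm (w ++ finalPerm w) = finalPerm w :=
  (List.Subset.dedup_append_right (List.subset_dedup w)).trans List.dedup_idem

/-- `w` ends with the last letter of `finalPerm w` and `s` starts with its first one. -/
theorem pattern11Count_append_of_prefix_finalPerm {w s : List V} (hs : s <+: finalPerm w)
    (hw : (finalPerm w).length ≠ 1) : pattern11Count (w ++ s) = pattern11Count w := by
  have hnd : (finalPerm w).Nodup := List.nodup_dedup w
  rw [pattern11Count_append_of_ne, pattern11Count_eq_zero_of_nodup_s3 (hnd.sublist hs.sublist),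
    Nat.add_zero]
  intro a ha b hb hab
  subst hab
  obtain ⟨s, rfl⟩ := List.head?_eq_some_iff.1 hb
  obtain ⟨u, hu⟩ := hs
  rw [← getLast?_finalPerm, ← hu] at ha
  rw [← hu] at hw hnd
  rcases hsu : s ++ u with _ | ⟨c, t⟩
  · exact hw (by simp [hsu])
  · rw [List.cons_append, hsu, List.nodup_cons] at hnd
    rw [List.cons_append, hsu, List.getLast?_cons_cons] at ha
    exact hnd.1 (List.mem_of_getLast? ha)

end FinalPerm

section PairCount

variable {V : Type*} [DecidableEq V]

def pairCount (w : List V) (a b : V) : ℕ :=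
  pattern11Count (w.filter fun c => decide (c = a ∨ c = b))

theorem pairCount_comm (w : List V) (a b : V) : pairCount w a b = pairCount w b a := by
  simp only [pairCount, or_comm]

theorem pairCount_filter {p : V → Bool} {a b : V} (ha : p a) (hb : p b) (w : List V) :
    pairCount (w.filter p) a b = pairCount w a b := by
  rw [pairCount, pairCount, List.filter_filter]
  congr 1
  refine List.filter_congr fun c _ => ?_
  by_cases hca : c = a
  · simp [hca, ha]
  · by_cases hcb : c = b <;> simp [hca, hcb, hb]

theorem pattern11Count_append_flatten_replicate_finalPerm {w s : List V}
    (hw : (finalPerm w).length ≠ 1) (hs : s <+: finalPerm w) (n : ℕ) :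
    pattern11Count (w ++ (List.replicate n (finalPerm w)).flatten ++ s) = pattern11Count w := by
  induction n generalizing w with
  | zero => simpa using pattern11Count_append_of_prefix_finalPerm hs hw
  | succ n ih =>
    have h := finalPerm_append_finalPerm w
    rw [List.replicate_succ, List.flatten_cons, ← List.append_assoc]
    have := ih (w := w ++ finalPerm w) (by rwa [h]) (by rwa [h])
    rw [h] at this
    rw [this, pattern11Count_append_of_prefix_finalPerm (List.prefix_refl _) hw]

theorem pairCount_append_flatten_replicate_finalPerm {w s : List V} {a b : V} (ha : a ∈ w)
    (hb : b ∈ w) (hab : a ≠ b) (hs : s <+: finalPerm w) (n : ℕ) :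
    pairCount (w ++ (List.replicate n (finalPerm w)).flatten ++ s) a b = pairCount w a b := by
  set p : V → Bool := fun c => decide (c = a ∨ c = b)
  have hlen : (finalPerm (w.filter p)).length ≠ 1 := by
    intro h
    obtain ⟨c, hc⟩ := List.length_eq_one_iff.1 h
    have hmem : ∀ d ∈ w, p d → d = c := fun d hd hpd => by
      have : d ∈ finalPerm (w.filter p) := List.mem_dedup.2 (List.mem_filter.2 ⟨hd, hpd⟩)
      simpa [hc] using this
    exact hab ((hmem a ha (by simp [p])).trans (hmem b hb (by simp [p])).symm)
  have := pattern11Count_append_flatten_replicate_finalPerm (s := s.filter p) hlen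
    (by rw [finalPerm_filter]; exact hs.filter p) n
  simpa only [pairCount, List.filter_append, List.filter_flatten, List.map_replicate,
    finalPerm_filter] using this

end PairCount

theorem List.flatten_replicate_append_append {α : Type*} (a b : List α) (n : ℕ) :
    (List.replicate n (a ++ b)).flatten ++ a = a ++ (List.replicate n (b ++ a)).flatten := by
  induction n with
  | zero => simp
  | succ n ih => simp [List.replicate_succ, ih]

theorem List.flatten_replicate_append_self {α : Type*} (l : List α) (n : ℕ) :
    (List.replicate n (l ++ l)).flatten = (List.replicate (2 * n) l).flatten := by
  induction n with
  | zero => simp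
  | succ n ih => simp [Nat.mul_succ, List.replicate_succ, ih]

section InsertAfter

variable {V : Type*} [DecidableEq V]

def insertAfter (x y : V) (m : List V) : List V :=
  m.flatMap fun c => if c = x then [x, y] else [c]

theorem subset_insertAfter (x y : V) (m : List V) : m ⊆ insertAfter x y m := fun c hc =>
  List.mem_flatMap.2 ⟨c, hc, by split_ifs with h <;> simp [h]⟩

theorem filter_insertAfter_of_eq_false {x y : V} {p : V → Bool} (hy : p y = false)
    (m : List V) : (insertAfter x y m).filter p = m.filter p := by
  induction m with
  | nil => rfl
  | cons c m ih =>
    rw [insertAfter, List.flatMap_cons, List.filter_append, ← insertAfter, ih]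
    split_ifs with h
    · subst h; by_cases hc : p c <;> simp [hc, hy]
    · by_cases hc : p c <;> simp [hc]

theorem filter_insertAfter_pair {x y : V} (hxy : x ≠ y) {m : List V} (hym : y ∉ m) :
    (insertAfter x y m).filter (fun c => decide (c = x ∨ c = y))
      = (List.replicate (m.count x) [x, y]).flatten := by
  induction m with
  | nil => rfl
  | cons c m ih =>
    rw [List.mem_cons, not_or] at hym
    rw [insertAfter, List.flatMap_cons, List.filter_append, ← insertAfter, ih hym.2,
      List.count_cons]
    by_cases hcx : c = x
    · subst hcx; simp [List.replicate_succ]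
    · simp [hcx, Ne.symm hym.1]

end InsertAfter

section PendantWord

variable {V : Type*} [DecidableEq V] {x y : V} {k : ℕ} {m P Q : List V}

def pendantWord (x y : V) (k : ℕ) (m P Q : List V) : List V :=
  insertAfter x y m ++ P ++ [x] ++
    (List.replicate (k + 1) ((Q ++ P) ++ [y, x, y] ++ (Q ++ P) ++ [x])).flatten

theorem subset_pendantWord : m ⊆ pendantWord x y k m P Q := fun _ hc =>
  List.mem_append_left _ (List.mem_append_left _ (List.mem_append_left _
    (subset_insertAfter x y m hc)))

theorem mem_pendantWord_right : y ∈ pendantWord x y k m P Q :=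
  List.mem_append_right _ (List.mem_flatten.2 ⟨_, List.mem_replicate.2 ⟨by simp, rfl⟩, by simp⟩)

theorem filter_ne_pendantWord (hσ : finalPerm m = P ++ x :: Q) (hym : y ∉ m) :
    (pendantWord x y k m P Q).filter (fun c => decide (c ≠ y))
      = m ++ (List.replicate (2 * (k + 1)) (finalPerm m)).flatten ++ (P ++ [x]) := by
  have hyσ : y ∉ finalPerm m := fun h => hym (List.mem_dedup.1 h)
  rw [hσ] at hyσ
  simp only [List.mem_append, List.mem_cons, not_or] at hyσ
  have hkeep : ∀ l : List V, y ∉ l → l.filter (fun c => decide (c ≠ y)) = l := fun l hl =>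
    List.filter_eq_self.2 fun c hc => decide_eq_true (ne_of_mem_of_not_mem hc hl)
  have hrot : (List.replicate (2 * (k + 1)) (P ++ x :: Q)).flatten ++ (P ++ [x])
      = P ++ [x] ++ (List.replicate (k + 1) (Q ++ (P ++ [x]) ++ (Q ++ (P ++ [x])))).flatten := by
    rw [List.flatten_replicate_append_self, ← List.flatten_replicate_append_append]
    simp
  rw [hσ, List.append_assoc m, hrot]
  simp only [pendantWord, List.filter_append, List.filter_flatten, List.map_replicate,
    filter_insertAfter_of_eq_false (x := x) (y := y) (p := fun c => decide (c ≠ y)) (by simp),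
    hkeep m hym, hkeep P hyσ.1, hkeep Q hyσ.2.2]
  simp [Ne.symm hyσ.2.1]

theorem pairCount_pendantWord (hσ : finalPerm m = P ++ x :: Q) (hym : y ∉ m) {a b : V}
    (ha : a ∈ m) (hb : b ∈ m) (hab : a ≠ b) :
    pairCount (pendantWord x y k m P Q) a b = pairCount m a b := by
  rw [← pairCount_filter (p := fun c => decide (c ≠ y))
      (decide_eq_true (ne_of_mem_of_not_mem ha hym)) (decide_eq_true (ne_of_mem_of_not_mem hb hym)),
    filter_ne_pendantWord hσ hym,
    pairCount_append_flatten_replicate_finalPerm ha hb hab (by rw [hσ]; exact ⟨Q, by simp⟩)]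

theorem pairCount_pendantWord_left_right (hxy : x ≠ y) (hσ : finalPerm m = P ++ x :: Q)
    (hym : y ∉ m) : pairCount (pendantWord x y k m P Q) x y = 0 := by
  have hnd : (x :: (P ++ Q)).Nodup := List.nodup_middle.1 (hσ ▸ List.nodup_dedup m)
  have hyσ : y ∉ P ++ x :: Q := fun h => hym (List.mem_dedup.1 (by rwa [← hσ] at h))
  simp only [List.nodup_cons, List.mem_append, not_or] at hnd
  simp only [List.mem_append, List.mem_cons, not_or] at hyσ
  have hdrop : ∀ l : List V, x ∉ l → y ∉ l → l.filter (fun c => decide (c = x ∨ c = y)) = [] :=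
    fun l hx hy => List.filter_eq_nil_iff.2 fun c hc => by
      simpa using And.intro (ne_of_mem_of_not_mem hc hx) (ne_of_mem_of_not_mem hc hy)
  have hword : (pendantWord x y k m P Q).filter (fun c => decide (c = x ∨ c = y))
      = x :: (List.replicate (m.count x + 2 * (k + 1)) [y, x]).flatten := by
    simp only [pendantWord, List.filter_append, List.filter_flatten, List.map_replicate,
      filter_insertAfter_pair hxy hym, hdrop P hnd.1.1 hyσ.1, hdrop Q hnd.1.2 hyσ.2.2]
    simp only [List.filter, decide_true, Ne.symm hxy, or_true, true_or, List.append_nil,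
      List.nil_append]
    rw [List.replicate_add _ (2 * (k + 1)), List.flatten_append,
      ← List.flatten_replicate_append_self, ← List.cons_append]
    exact congrArg (· ++ _) (List.flatten_replicate_append_append [x] [y] _)
  rw [pairCount, hword, pattern11Count_cons_flatten_replicate hxy]

theorem lt_pairCount_pendantWord_right (hσ : finalPerm m = P ++ x :: Q) (hym : y ∉ m) {v : V}
    (hv : v ∈ m) (hvx : v ≠ x) : k < pairCount (pendantWord x y k m P Q) y v := by
  set p : V → Bool := fun c => decide (c = y ∨ c = v)
  have hvy : v ≠ y := ne_of_mem_of_not_mem hv hym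
  have hyσ : y ∉ P ++ x :: Q := fun h => hym (List.mem_dedup.1 (by rwa [← hσ] at h))
  have hτ : (Q ++ P).filter p = [v] := by
    have hcount : (Q ++ P).count v = 1 := by
      have := List.count_dedup m v
      rw [if_pos hv, ← finalPerm, hσ, List.count_append, List.count_cons_of_ne hvx.symm] at this
      rw [List.count_append]; omega
    rw [← List.replicate_one, ← hcount, ← List.filter_eq]
    refine List.filter_congr fun c hc => ?_
    have hcy : c ≠ y := fun h => hyσ (by simp_all)
    simp [p, hcy]
  have hblock : ∀ τ : List V, τ.filter p = [v] →
      (τ ++ [y, x, y] ++ τ ++ [x]).filter p = [v, y, y, v] := fun τ h => by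
    have hxy : x ≠ y := fun hxy => hyσ (by simp [hxy])
    simp only [List.filter_append, h]
    simp [p, hvx.symm, hxy]
  calc k < (k + 1) * pattern11Count [v, y, y, v] := by
        simp [pattern11Count_cons_cons, hvy, hvy.symm, show pattern11Count [v] = 0 from rfl]
    _ ≤ pattern11Count (List.replicate (k + 1) [v, y, y, v]).flatten := mul_pattern11Count_le _ _
    _ ≤ pairCount (pendantWord x y k m P Q) y v := by
        rw [pairCount, pendantWord, List.filter_append, List.filter_flatten, List.map_replicate,
          hblock _ hτ]
        exact le_trans (Nat.le_add_left _ _) (pattern11Count_add_le_append _ _)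

end PendantWord

section Induce

variable {V : Type*} [DecidableEq V] {G : SimpleGraph V} {k : ℕ}

/-- `w` is a `k`-11-representant of `G.induce S`, read as a word over `V`. -/
def IsK11RepOn (G : SimpleGraph V) (k : ℕ) (S : Set V) (w : List V) : Prop :=
  (∀ v ∈ S, v ∈ w) ∧ ∀ a ∈ S, ∀ b ∈ S, a ≠ b → (G.Adj a b ↔ pairCount w a b ≤ k)

theorem pairCount_map_val {S : Set V} (u : List S) (a b : S) :
    pairCount (u.map Subtype.val) a b = pairCount u a b := by
  rw [pairCount, List.filter_map, pattern11Count_map Subtype.val_injective]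
  congr 2
  ext c
  simp [Subtype.ext_iff]

theorem isK11Rep_induce_iff {S : Set V} (u : List S) :
    IsK11Rep (G.induce S) k u ↔ IsK11RepOn G k S (u.map Subtype.val) := by
  refine and_congr ⟨fun h v hv => List.mem_map_of_mem (h ⟨v, hv⟩),
    fun h v => by simpa using h v v.2⟩ ⟨fun h a ha b hb hab => ?_, fun h a b hab => ?_⟩
  · rw [show a = (⟨a, ha⟩ : S) from rfl, show b = (⟨b, hb⟩ : S) from rfl, pairCount_map_val]
    exact h ⟨a, ha⟩ ⟨b, hb⟩ (by simpa [Subtype.ext_iff] using hab)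
  · exact (h a a.2 b b.2 (Subtype.coe_ne_coe.2 hab)).trans (by rw [pairCount_map_val]; rfl)

theorem k11Representable_induce_iff {S : Set V} :
    K11Representable (G.induce S) k ↔ ∃ w : List V, (∀ c ∈ w, c ∈ S) ∧ IsK11RepOn G k S w := by
  constructor
  · rintro ⟨u, hu⟩
    refine ⟨_, fun c hc => ?_, (isK11Rep_induce_iff u).1 hu⟩
    obtain ⟨c, -, rfl⟩ := List.mem_map.1 hc
    exact c.2
  · rintro ⟨w, hwS, hw⟩
    lift w to List S using hwS
    exact ⟨w, (isK11Rep_induce_iff w).2 hw⟩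

theorem IsK11Rep.isK11RepOn_filter {w : List V} (hw : IsK11Rep G k w) (S : Set V)
    [DecidablePred (· ∈ S)] : IsK11RepOn G k S (w.filter (· ∈ S)) :=
  ⟨fun v hv => List.mem_filter.2 ⟨hw.1 v, decide_eq_true hv⟩, fun a ha b hb hab => by
    rw [pairCount_filter (p := fun c => decide (c ∈ S)) (decide_eq_true ha) (decide_eq_true hb)]
    exact hw.2 a b hab⟩

end Induce

theorem isK11Rep_pendantWord {V : Type*} [DecidableEq V] {H : SimpleGraph V} {k : ℕ}
    {x y : V} {m P Q : List V} (hadj : H.Adj x y) (hdeg : ∀ z, H.Adj y z → z = x)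
    (hm : IsK11RepOn H k {u | u ≠ y} m) (hym : y ∉ m) (hσ : finalPerm m = P ++ x :: Q) :
    IsK11Rep H k (pendantWord x y k m P Q) := by
  have hxy : x ≠ y := hadj.ne
  have hpendant : ∀ v ≠ y, H.Adj y v ↔ pairCount (pendantWord x y k m P Q) y v ≤ k := by
    intro v hvy
    by_cases hvx : v = x
    · subst hvx
      rw [pairCount_comm, pairCount_pendantWord_left_right hxy hσ hym]
      exact iff_of_true hadj.symm (Nat.zero_le k)
    · exact iff_of_false (fun h => hvx (hdeg v h))
        (not_le.2 (lt_pairCount_pendantWord_right hσ hym (hm.1 v hvy) hvx))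
  refine ⟨fun v => ?_, fun a b hab => ?_⟩
  · rcases eq_or_ne v y with rfl | hvy
    · exact mem_pendantWord_right
    · exact subset_pendantWord (hm.1 v hvy)
  · change H.Adj a b ↔ pairCount _ a b ≤ k
    rcases eq_or_ne a y with rfl | hay
    · exact hpendant b hab.symm
    rcases eq_or_ne b y with rfl | hby
    · rw [H.adj_comm, pairCount_comm]
      exact hpendant a hay
    rw [pairCount_pendantWord hσ hym (hm.1 a hay) (hm.1 b hby) hab]
    exact hm.2 a hay b hby hab

theorem k11Representable_addPendant_general {V : Type*} [DecidableEq V] (k : ℕ)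
    (H : SimpleGraph V) (x y : V) (hadj : H.Adj x y)
    (hdeg : ∀ z : V, H.Adj y z → z = x) :
    K11Representable H k ↔ K11Representable (H.induce {u : V | u ≠ y}) k := by
  rw [k11Representable_induce_iff]
  constructor
  · rintro ⟨w, hw⟩
    exact ⟨_, fun c hc => of_decide_eq_true (List.mem_filter.1 hc).2, hw.isK11RepOn_filter _⟩
  · rintro ⟨m, hmS, hm⟩
    have hym : y ∉ m := fun h => hmS y h rfl
    obtain ⟨P, Q, hσ⟩ := List.append_of_mem (List.mem_dedup.2 (hm.1 x hadj.ne))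
    exact ⟨_, isK11Rep_pendantWord hadj hdeg hm hym hσ⟩

/-- if `y` is a vertex of degree 1 in `H` whose unique neighbour is `x`,
then `H` is `k`-11-representable iff `H \ y` is `k`-11-representable. -/
theorem k11Representable_addPendant {V : Type*} [DecidableEq V] [Fintype V] (k : ℕ)
    (H : SimpleGraph V) (x y : V) (hadj : H.Adj x y)
    (hdeg : ∀ z : V, H.Adj y z → z = x) :
    K11Representable H k ↔ K11Representable (H.induce {u : V | u ≠ y}) k :=
  k11Representable_addPendant_general k H x y hadj hdeg
end

section
/- A simple graph is an interval graph if and only if it is 2-uniformly 1-11-representable, i.e., if and only if it has a 1-11-representant in which every vertex occurs exactly twice. -/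
/-- `G` is an interval graph: each vertex gets a nonempty closed real interval such that
distinct vertices are adjacent iff their intervals intersect. -/
def IsIntervalGraph {V : Type*} (G : SimpleGraph V) : Prop :=
  ∃ I : V → Set ℝ,
    (∀ v : V, ∃ a b : ℝ, a ≤ b ∧ I v = Set.Icc a b) ∧
    ∀ u v : V, u ≠ v → (G.Adj u v ↔ (I u ∩ I v).Nonempty)

/-!
In a word in which `x` and `y` each occur twice, the subword on `{x, y}` is an arrangement of
`xxyy`, and every arrangement other than `xxyy` and `yyxx` has at most one factor `11`. So `x`
and `y` are adjacent iff the occurrences of neither all precede those of the other, i.e. iff the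
intervals spanned by their two occurrences meet. Conversely, from intervals one gets such a word
by listing all endpoints in increasing order, putting left endpoints first at ties.
-/

section Precedes

variable {V : Type*}

def Precedes (w : List V) (x y : V) : Prop :=
  w.Pairwise fun a b => a = y → b ≠ x

variable {x y : V}

lemma precedes_filter_iff {p : V → Bool} (hx : p x) (hy : p y) (w : List V) :
    Precedes (w.filter p) x y ↔ Precedes w x y := by
  unfold Precedes
  rw [List.pairwise_filter]
  refine List.Pairwise.iff fun a b => ?_
  constructor
  · rintro h rfl rfl
    exact h hy hx rfl rfl
  · exact fun h _ _ => h

variable [DecidableEq V]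

lemma filter_perm_of_count_eq_two {w : List V} (hxy : x ≠ y) (hx : w.count x = 2)
    (hy : w.count y = 2) :
    (w.filter fun a => decide (a = x ∨ a = y)).Perm [x, x, y, y] := by
  rw [List.perm_iff_count]
  intro a
  by_cases ha : a = x ∨ a = y
  · rw [List.count_filter (by simpa using ha)]
    rcases ha with rfl | rfl <;> simp [*, Ne.symm hxy]
  · obtain ⟨hax, hay⟩ := not_or.1 ha
    rw [List.count_eq_zero.2 (by simp [hax, hay])]
    simp [Ne.symm hax, Ne.symm hay]

lemma pattern11Count_le_one_iff_of_perm {u : List V} (hxy : x ≠ y)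
    (hu : u.Perm [x, x, y, y]) :
    pattern11Count u ≤ 1 ↔ ¬Precedes u x y ∧ ¬Precedes u y x := by
  have h : ∀ u ∈ [x, x, y, y].permutations',
      pattern11Count u ≤ 1 ↔ ¬Precedes u x y ∧ ¬Precedes u y x := by
    simp [List.permutations', List.permutations'Aux, pattern11Count, Precedes, hxy, Ne.symm hxy]
  exact h u (List.mem_permutations'.2 hu)

lemma pattern11Count_filter_le_one_iff {w : List V} (hxy : x ≠ y) (hx : w.count x = 2)
    (hy : w.count y = 2) :
    pattern11Count (w.filter fun a => decide (a = x ∨ a = y)) ≤ 1 ↔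
      ¬Precedes w x y ∧ ¬Precedes w y x := by
  rw [pattern11Count_le_one_iff_of_perm hxy (filter_perm_of_count_eq_two hxy hx hy),
    precedes_filter_iff (by simp) (by simp), precedes_filter_iff (by simp) (by simp)]

lemma uniformK11Rep_two_one_iff (G : SimpleGraph V) :
    UniformK11Rep G 2 1 ↔ ∃ w : List V, (∀ v, w.count v = 2) ∧
      ∀ x y, x ≠ y → (G.Adj x y ↔ ¬Precedes w x y ∧ ¬Precedes w y x) := by
  refine exists_congr fun w => ?_
  constructor
  · rintro ⟨⟨-, hadj⟩, hw⟩
    refine ⟨hw, fun x y hxy => ?_⟩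
    rw [hadj x y hxy, pattern11Count_filter_le_one_iff hxy (hw x) (hw y)]
  · rintro ⟨hw, hadj⟩
    refine ⟨⟨fun v => List.count_pos_iff.1 (by simp [hw v]), fun x y hxy => ?_⟩, hw⟩
    rw [hadj x y hxy, pattern11Count_filter_le_one_iff hxy (hw x) (hw y)]

end Precedes

lemma List.Pairwise.rel_or_rel {α : Type*} {R : α → α → Prop} {l : List α} (hl : l.Pairwise R)
    {a b : α} (ha : a ∈ l) (hb : b ∈ l) (hab : a ≠ b) : R a b ∨ R b a :=
  have : Std.Symm fun c d => R c d ∨ R d c := ⟨fun _ _ => Or.symm⟩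
  (hl.imp Or.inl : l.Pairwise fun c d => R c d ∨ R d c).forall ha hb hab

section Endpoints

variable {V : Type*} (a b : V → ℝ)

/-- The left endpoint of `v` is the event `(v, false)` at `a v`, the right one `(v, true)` at
`b v`; at a common position left endpoints come first, so touching intervals overlap. -/
def endpointKey (e : V × Bool) : ℝ ×ₗ Bool :=
  toLex (if e.2 then b e.1 else a e.1, e.2)

variable {a b}

lemma left_le_endpointKey (hab : ∀ v, a v ≤ b v) (v : V) (t : Bool) :
    toLex (a v, false) ≤ endpointKey a b (v, t) := by
  cases t <;> simp [endpointKey, Prod.Lex.toLex_le_toLex, (hab v).lt_or_eq]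

lemma endpointKey_le_right (hab : ∀ v, a v ≤ b v) (v : V) (t : Bool) :
    endpointKey a b (v, t) ≤ toLex (b v, true) := by
  cases t <;> simp [endpointKey, Prod.Lex.toLex_le_toLex, (hab v).lt_or_eq]

lemma precedes_map_fst_iff {es : List (V × Bool)} (hab : ∀ v, a v ≤ b v)
    (hsorted : es.Pairwise fun e f => endpointKey a b e ≤ endpointKey a b f) {x y : V}
    (hx : (x, true) ∈ es) (hy : (y, false) ∈ es) :
    Precedes (es.map Prod.fst) x y ↔ b x < a y := by
  unfold Precedes
  rw [List.pairwise_map]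
  constructor
  · intro hprec
    rcases (hsorted.and hprec).rel_or_rel hx hy (by simp) with ⟨hle, -⟩ | ⟨-, hne⟩
    · simpa [endpointKey, Prod.Lex.toLex_le_toLex, Bool.le_iff_imp] using hle
    · exact absurd rfl (hne rfl)
  · intro hlt
    refine hsorted.imp fun {e f} hef he hf => ?_
    obtain ⟨u, s⟩ := e
    obtain ⟨v, t⟩ := f
    dsimp only at he hf
    subst he hf
    have : endpointKey a b (v, t) < endpointKey a b (u, s) :=
      calc endpointKey a b (v, t) ≤ toLex (b v, true) := endpointKey_le_right hab v t
        _ < toLex (a u, false) := Prod.Lex.toLex_lt_toLex.2 (.inl hlt)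
        _ ≤ endpointKey a b (u, s) := left_le_endpointKey hab u s
    exact this.not_ge hef

lemma exists_word_precedes_iff [DecidableEq V] [Fintype V] (hab : ∀ v, a v ≤ b v) :
    ∃ w : List V, (∀ v, w.count v = 2) ∧ ∀ x y, Precedes w x y ↔ b x < a y := by
  set E := (Finset.univ : Finset V).toList
  set es := (E.map (·, false) ++ E.map (·, true)).mergeSort
    fun e f => decide (endpointKey a b e ≤ endpointKey a b f)
  have hperm : es.Perm (E.map (·, false) ++ E.map (·, true)) := List.mergeSort_perm _ _
  have hsorted : es.Pairwise fun e f => endpointKey a b e ≤ endpointKey a b f := by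
    simpa using List.pairwise_mergeSort
      (le := fun e f => decide (endpointKey a b e ≤ endpointKey a b f))
      (fun _ _ _ => by simpa using le_trans) (fun _ _ => by simpa using le_total _ _) _
  have hmem : ∀ e, e ∈ es := by
    rintro ⟨v, t⟩
    cases t <;> simp [hperm.mem_iff, E]
  refine ⟨es.map Prod.fst, fun v => ?_,
    fun x y => precedes_map_fst_iff hab hsorted (hmem _) (hmem _)⟩
  have hE : E.count v = 1 := List.count_eq_one_of_mem (Finset.nodup_toList _) (by simp [E])
  simp [(hperm.map Prod.fst).count_eq, Function.comp_def, hE]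

end Endpoints

section Positions

variable {V : Type*} [DecidableEq V]

def positions (w : List V) (v : V) : Finset (Fin w.length) :=
  Finset.univ.filter fun i => w.get i = v

lemma positions_nonempty {w : List V} {v : V} (hv : v ∈ w) : (positions w v).Nonempty := by
  obtain ⟨i, hi⟩ := List.mem_iff_get.1 hv
  exact ⟨i, by simpa [positions] using hi⟩

lemma precedes_iff_max'_lt_min' {w : List V} {x y : V} (hxy : x ≠ y)
    (hx : (positions w x).Nonempty) (hy : (positions w y).Nonempty) :
    Precedes w x y ↔ (positions w x).max' hx < (positions w y).min' hy := by
  simp only [Precedes, List.pairwise_iff_get, Finset.max'_lt_iff, Finset.lt_min'_iff, positions,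
    Finset.mem_filter, Finset.mem_univ, true_and]
  constructor
  · intro h i hi j hj
    rcases lt_trichotomy j i with hji | rfl | hij
    · exact hji
    · exact absurd (hj.symm.trans hi) hxy
    · exact absurd hj (h i j hij hi)
  · intro h i j hij hi hj
    exact (h i hi j hj).not_gt hij

lemma exists_endpoints_precedes_iff (w : List V) (hw : ∀ v, v ∈ w) :
    ∃ a b : V → ℝ, (∀ v, a v ≤ b v) ∧ ∀ x y, x ≠ y → (Precedes w x y ↔ b x < a y) := by
  have hne v := positions_nonempty (hw v)
  refine ⟨fun v => ((positions w v).min' (hne v) : ℕ), fun v => ((positions w v).max' (hne v) : ℕ),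
    fun v => ?_, fun x y hxy => ?_⟩
  · exact Nat.cast_le.2 (Finset.min'_le_max' (positions w v) (hne v))
  · rw [precedes_iff_max'_lt_min' hxy (hne x) (hne y), Nat.cast_lt, Fin.lt_def]

end Positions

lemma isIntervalGraph_iff_exists_endpoints {V : Type*} (G : SimpleGraph V) :
    IsIntervalGraph G ↔ ∃ a b : V → ℝ, (∀ v, a v ≤ b v) ∧
      ∀ u v, u ≠ v → (G.Adj u v ↔ ¬b u < a v ∧ ¬b v < a u) := by
  constructor
  · rintro ⟨I, hI, hadj⟩
    choose a b hab hIab using hI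
    refine ⟨a, b, hab, fun u v huv => ?_⟩
    rw [hadj u v huv, hIab u, hIab v, Set.Icc_inter_Icc, Set.nonempty_Icc]
    simp [hab u, hab v]
  · rintro ⟨a, b, hab, hadj⟩
    refine ⟨fun v => Set.Icc (a v) (b v), fun v => ⟨a v, b v, hab v, rfl⟩, fun u v huv => ?_⟩
    rw [hadj u v huv, Set.Icc_inter_Icc, Set.nonempty_Icc]
    simp [hab u, hab v]

/-- a graph is an interval graph iff it is 2-uniformly
1-11-representable. -/
theorem intervalGraph_iff_two_uniform_one_eleven {V : Type*} [DecidableEq V] [Fintype V]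
    (G : SimpleGraph V) :
    IsIntervalGraph G ↔ UniformK11Rep G 2 1 := by
  rw [isIntervalGraph_iff_exists_endpoints, uniformK11Rep_two_one_iff]
  constructor
  · rintro ⟨a, b, hab, hadj⟩
    obtain ⟨w, hw, hprec⟩ := exists_word_precedes_iff hab
    exact ⟨w, hw, fun x y hxy => by rw [hadj x y hxy, hprec, hprec]⟩
  · rintro ⟨w, hw, hadj⟩
    obtain ⟨a, b, hab, hprec⟩ :=
      exists_endpoints_precedes_iff w fun v => List.count_pos_iff.1 (by simp [hw v])
    exact ⟨a, b, hab, fun x y hxy => by rw [hadj x y hxy, hprec x y hxy, hprec y x hxy.symm]⟩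
end
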